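/- Mixing Lemma: let A be a complete Heyting algebra, {u_i : i ∈ I} a family of A-names and {a_i : i ∈ I} ⊆ A, and let u be the mixture Σ_{i∈I} a_i·u_i. If a_i ⊓ a_j ≤ ‖u_i ≈ u_j‖ for all i, j ∈ I, then a_i ≤ ‖u_i ≈ u‖ for every i ∈ I. -/

import Mathlib

universe u

/-- The universe `V^A` of `A`-names over a complete Heyting algebra `A`:
an `A`-name is a function from a set (of previously constructed `A`-names)
into `A`, here encoded by an indexing type `ι`, a family `elts` of names and
the family `val` of their attached truth values. -/
inductive HName (A : Type u) : Type (u + 1) where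
  | mk (ι : Type u) (elts : ι → HName A) (val : ι → A)

namespace HName

variable {A : Type u}

/-- The indexing type of (the domain of) a name. -/
def ι : HName A → Type u
  | mk ι _ _ => ι

/-- The members of (the domain of) a name. -/
def elts : (u : HName A) → u.ι → HName A
  | mk _ e _ => e

/-- The values attached by a name to the members of its domain. -/
def val : (u : HName A) → u.ι → A
  | mk _ _ v => v

/-- Ordinal rank of a name (used for the recursive definition of truth values). -/
noncomputable def rank : HName A → Ordinal.{u}
  | mk _ e _ => Ordinal.lsub fun i => (e i).rank

theorem rank_lt {ι : Type u} (e : ι → HName A) (v : ι → A) (i : ι) :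
    (e i).rank < (mk ι e v).rank := Ordinal.lt_lsub _ i

variable [Order.Frame A]

/-- The truth value `‖u ≈ v‖` of equality of two names, defined by the recursion
`‖u ≈ v‖ = ⨅_{x ∈ dom u} (u(x) ⇨ ‖x ∈ v‖) ⊓ ⨅_{y ∈ dom v} (v(y) ⇨ ‖y ∈ u‖)`,
where `‖x ∈ v‖ = ⨆_{y ∈ dom v} (v(y) ⊓ ‖y ≈ x‖)` is inlined. -/
noncomputable def eqVal : HName A → HName A → A
  | mk ι e a, mk κ f b =>
      (⨅ i, a i ⇨ ⨆ j, b j ⊓ eqVal (f j) (e i)) ⊓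
      (⨅ j, b j ⇨ ⨆ i, a i ⊓ eqVal (e i) (f j))
termination_by u v => max u.rank v.rank
decreasing_by
  · exact max_lt (lt_max_of_lt_right (rank_lt f b j)) (lt_max_of_lt_left (rank_lt e a i))
  · exact max_lt (lt_max_of_lt_left (rank_lt e a i)) (lt_max_of_lt_right (rank_lt f b j))

/-- The truth value `‖u ∈ v‖ = ⨆_{x ∈ dom v} (v(x) ⊓ ‖x ≈ u‖)` of membership. -/
noncomputable def memVal (u v : HName A) : A :=
  ⨆ j : v.ι, v.val j ⊓ eqVal (v.elts j) u

end HName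


open HName in
/-- The mixture `Σ_{i∈I} a_i · u_i` of a family of names `u_i` with weights `a_i`:
its domain is the union of the domains of the `u_i`, and it assigns to a member
`x` the value `⨆_{i∈I} (a_i ⊓ ‖x ∈ u_i‖)`. -/
noncomputable def HName.mixture {A : Type u} [Order.Frame A] {I : Type u}
    (a : I → A) (w : I → HName A) : HName A :=
  HName.mk (Σ i : I, (w i).ι) (fun p => (w p.1).elts p.2)
    (fun p => ⨆ i : I, a i ⊓ HName.memVal ((w p.1).elts p.2) (w i))

/-!
`‖· ≈ ·‖` is reflexive, symmetric and transitive (transitivity by induction on the first name,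
using symmetry to turn the chain around), so `‖u ≈ v‖ ⊓ ‖x ∈ v‖ ≤ ‖x ∈ u‖`. For the mixture
`u = Σ aⱼ·uⱼ`, every member `x` of `uᵢ` lies in `u` with value at least `aᵢ ⊓ uᵢ(x)`; conversely,
below `aᵢ` the value `u(x) = ⨆ⱼ aⱼ ⊓ ‖x ∈ uⱼ‖` is at most `⨆ⱼ ‖uᵢ ≈ uⱼ‖ ⊓ ‖x ∈ uⱼ‖ ≤ ‖x ∈ uᵢ‖`.
-/

namespace HName

variable {A : Type u} [Order.Frame A]

theorem eqVal_def (u v : HName A) :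
    eqVal u v = (⨅ x, u.val x ⇨ memVal (u.elts x) v) ⊓
      (⨅ y, v.val y ⇨ memVal (v.elts y) u) := by
  cases u; cases v; rw [eqVal]; rfl

theorem le_eqVal_iff {c : A} {u v : HName A} :
    c ≤ eqVal u v ↔ (∀ x, c ⊓ u.val x ≤ memVal (u.elts x) v) ∧
      ∀ y, c ⊓ v.val y ≤ memVal (v.elts y) u := by
  simp only [eqVal_def, le_inf_iff, le_iInf_iff, le_himp_iff]

theorem eqVal_comm (u v : HName A) : eqVal u v = eqVal v u := by
  rw [eqVal_def, eqVal_def v u, inf_comm]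

theorem eqVal_self (u : HName A) : eqVal u u = ⊤ := by
  induction u with
  | mk ι e a ih =>
    have h : ∀ x, ⊤ ⊓ a x ≤ ⨆ y, a y ⊓ eqVal (e y) (e x) := fun x =>
      le_iSup_of_le x (by rw [ih x, top_inf_eq, inf_top_eq])
    exact eq_top_iff.2 (le_eqVal_iff.2 ⟨h, h⟩)

theorem val_le_memVal (u : HName A) (x : u.ι) : u.val x ≤ memVal (u.elts x) u :=
  le_iSup_of_le x (by rw [eqVal_self, inf_top_eq])

theorem eqVal_inf_memVal_le_of_eqVal_trans {u v s : HName A}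
    (H : ∀ x y, eqVal (u.elts x) y ⊓ eqVal y s ≤ eqVal (u.elts x) s) :
    eqVal u v ⊓ memVal s v ≤ memVal s u := by
  rw [memVal, inf_iSup_eq]
  refine iSup_le fun y => ?_
  calc eqVal u v ⊓ (v.val y ⊓ eqVal (v.elts y) s)
      ≤ memVal (v.elts y) u ⊓ eqVal (v.elts y) s := by
        rw [← inf_assoc]
        exact inf_le_inf_right _ ((le_eqVal_iff.1 le_rfl).2 y)
    _ = ⨆ x, u.val x ⊓ eqVal (u.elts x) (v.elts y) ⊓ eqVal (v.elts y) s := iSup_inf_eq _ _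
    _ ≤ memVal s u := iSup_mono fun x => (inf_assoc _ _ _).le.trans (inf_le_inf_left _ (H x _))

theorem eqVal_trans (u v w : HName A) : eqVal u v ⊓ eqVal v w ≤ eqVal u w := by
  induction u generalizing v w with
  | mk ι e a ih =>
    refine le_eqVal_iff.2 ⟨fun x => ?_, fun z => ?_⟩
    · -- `‖z ≈ y‖ ⊓ ‖y ≈ e x‖ ≤ ‖z ≈ e x‖` is the induction hypothesis at `x` read backwards
      have hx : eqVal (mk ι e a) v ⊓ a x ≤ memVal (e x) v := (le_eqVal_iff.1 le_rfl).1 x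
      calc eqVal (mk ι e a) v ⊓ eqVal v w ⊓ a x ≤ eqVal w v ⊓ memVal (e x) v := by
            rw [eqVal_comm v w, inf_right_comm]
            exact inf_le_inf_right _ hx |>.trans_eq (inf_comm _ _)
        _ ≤ memVal (e x) w := eqVal_inf_memVal_le_of_eqVal_trans fun z y => by
            rw [inf_comm, eqVal_comm y, eqVal_comm (w.elts z) y, eqVal_comm (w.elts z)]
            exact ih x _ _
    · calc eqVal (mk ι e a) v ⊓ eqVal v w ⊓ w.val z
          ≤ eqVal (mk ι e a) v ⊓ memVal (w.elts z) v := by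
            rw [inf_assoc]
            exact inf_le_inf_left _ ((le_eqVal_iff.1 le_rfl).2 z)
        _ ≤ memVal (w.elts z) (mk ι e a) :=
            eqVal_inf_memVal_le_of_eqVal_trans fun x y => ih x _ _

theorem eqVal_inf_memVal_le (u v s : HName A) : eqVal u v ⊓ memVal s v ≤ memVal s u :=
  eqVal_inf_memVal_le_of_eqVal_trans fun _ _ => eqVal_trans _ _ _

theorem inf_memVal_le_memVal_mixture {I : Type u} (a : I → A) (w : I → HName A) (i : I)
    (s : HName A) : a i ⊓ memVal s (w i) ≤ memVal s (mixture a w) := by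
  rw [memVal, inf_iSup_eq]
  refine iSup_le fun y => le_iSup_of_le (⟨i, y⟩ : Σ j, (w j).ι) ?_
  rw [← inf_assoc]
  exact inf_le_inf_right _ <|
    (inf_le_inf_left _ (val_le_memVal _ y)).trans (le_iSup_of_le i le_rfl)

end HName

open HName in
/-- Mixing Lemma: if `a_i ⊓ a_j ≤ ‖u_i ≈ u_j‖` for all `i, j ∈ I`, then
`a_i ≤ ‖u_i ≈ Σ_{j∈I} a_j · u_j‖` for every `i ∈ I`. -/
theorem mixing_lemma {A : Type u} [Order.Frame A] {I : Type u}
    (a : I → A) (w : I → HName A)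
    (h : ∀ i j, a i ⊓ a j ≤ eqVal (w i) (w j)) :
    ∀ i, a i ≤ eqVal (w i) (mixture a w) := by
  intro i
  refine le_eqVal_iff.2 ⟨fun x => ?_, fun ⟨j₀, y⟩ => ?_⟩
  · exact (inf_le_inf_left _ (val_le_memVal _ x)).trans (inf_memVal_le_memVal_mixture a w i _)
  · change a i ⊓ ⨆ j, a j ⊓ memVal _ (w j) ≤ _
    rw [inf_iSup_eq]
    refine iSup_le fun j => ?_
    calc a i ⊓ (a j ⊓ memVal ((w j₀).elts y) (w j))
        = a i ⊓ a j ⊓ memVal ((w j₀).elts y) (w j) := (inf_assoc _ _ _).symm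
      _ ≤ eqVal (w i) (w j) ⊓ memVal ((w j₀).elts y) (w j) := inf_le_inf_right _ (h i j)
      _ ≤ memVal ((w j₀).elts y) (w i) := eqVal_inf_memVal_le _ _ _
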